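/- Let H be a distribution function on [0,∞) and φ the piecewise density (with parameter b ≥ 2) as above, and set h*(s) = ∫_0^∞ φ(s − s') dH(s') and H̄*(s) = ∫_0^∞ (1 − Φ(s − s')) dH(s'). Then for any s₁ ≤ s₂, h*(s₂) − h*(s₁) ≤ e·b²·(s₂ − s₁)·H̄*(s₁). -/

import Mathlib

open Real MeasureTheory

/-- The piecewise density φ with parameter b. -/
noncomputable def phi (b : ℤ) (s : ℝ) : ℝ :=
  if s ≤ 0 then 0
  else if s ≤ 1 / b then (2 / 3) * (b : ℝ) ^ 2 * s
  else (2 / 3) * Real.exp 1 * (b : ℝ) * Real.exp (-(b : ℝ) * s)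

/-- The CDF of φ. -/
noncomputable def Phi (b : ℤ) (s : ℝ) : ℝ := ∫ s' in Set.Iic s, phi b s'

/-!
The density `φ` rises linearly with slope `2b²/3` up to `1/b` and decays afterwards, so
`φ t₂ - φ t₁ ≤ (2b²/3) (t₂ - t₁)` for `t₁ ≤ t₂`, and the increment is even nonpositive once
`t₁ > 1/b`. On the rising part `Φ t₁ ≤ Φ (1/b) = 1/3`, so `e (1 - Φ t₁) ≥ 2e/3 ≥ 2/3`;
on the decaying part `1 - Φ t₁ ≥ 0` since `φ` is a probability density. This gives
`φ t₂ - φ t₁ ≤ e b² (t₂ - t₁) (1 - Φ t₁)` pointwise, and the theorem follows by integrating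
the instance `t₁ = s₁ - s'`, `t₂ = s₂ - s'` against `dH(s')`.
-/

open Set

section Density

variable {b : ℤ} {s t : ℝ}

lemma phi_of_nonpos (hs : s ≤ 0) : phi b s = 0 := if_pos hs

lemma phi_of_mem_Icc (hs : s ∈ Icc 0 (1 / (b : ℝ))) : phi b s = 2 / 3 * (b : ℝ) ^ 2 * s := by
  rcases hs.1.eq_or_lt with rfl | hs₀
  · simp [phi]
  · simp only [phi, if_neg hs₀.not_ge, if_pos hs.2]

lemma phi_of_lt (hb : 0 < b) (hs : 1 / (b : ℝ) < s) :
    phi b s = 2 / 3 * exp 1 * (b : ℝ) * exp (-(b : ℝ) * s) := by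
  have hs₀ : 0 < s := (one_div_pos.mpr (Int.cast_pos.mpr hb)).trans hs
  simp only [phi, if_neg hs₀.not_ge, if_neg hs.not_ge]

lemma exp_one_mul_exp_neg_mul (c x : ℝ) : exp 1 * exp (-c * x) = exp (1 - c * x) := by
  rw [← exp_add]; ring_nf

lemma phi_nonneg (hb : 0 < b) (s : ℝ) : 0 ≤ phi b s := by
  have : (0 : ℝ) < b := Int.cast_pos.mpr hb
  unfold phi
  split_ifs with h
  · exact le_rfl
  · exact mul_nonneg (by positivity) (not_le.mp h).le
  · positivity

lemma phi_le (hb : 0 < b) (s : ℝ) : phi b s ≤ 2 / 3 * (b : ℝ) := by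
  have hb' : (0 : ℝ) < b := Int.cast_pos.mpr hb
  rcases le_or_gt s (1 / b) with hs | hs
  · rcases le_or_gt s 0 with hs₀ | hs₀
    · rw [phi_of_nonpos hs₀]; positivity
    · rw [phi_of_mem_Icc ⟨hs₀.le, hs⟩]
      calc 2 / 3 * (b : ℝ) ^ 2 * s ≤ 2 / 3 * (b : ℝ) ^ 2 * (1 / b) := by gcongr
        _ = 2 / 3 * (b : ℝ) := by field_simp
  · have : exp (1 - b * s) ≤ 1 :=
      exp_le_one_iff.mpr (by rw [div_lt_iff₀ hb'] at hs; linarith)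
    calc phi b s = 2 / 3 * b * exp (1 - b * s) := by
          rw [phi_of_lt hb hs, ← exp_one_mul_exp_neg_mul]; ring
      _ ≤ 2 / 3 * b := mul_le_of_le_one_right (by positivity) this

lemma phi_le_of_le (hb : 0 < b) (hst : s ≤ t) (ht : 0 ≤ t) :
    phi b s ≤ 2 / 3 * (b : ℝ) ^ 2 * t := by
  have hb' : (0 : ℝ) < b := Int.cast_pos.mpr hb
  rcases le_or_gt s 0 with hs₀ | hs₀
  · rw [phi_of_nonpos hs₀]; positivity
  rcases le_or_gt s (1 / b) with hs | hs
  · rw [phi_of_mem_Icc ⟨hs₀.le, hs⟩]; gcongr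
  · calc phi b s ≤ 2 / 3 * b := phi_le hb s
      _ = 2 / 3 * b ^ 2 * (1 / b) := by field_simp
      _ ≤ 2 / 3 * b ^ 2 * t := by gcongr; exact (hs.trans_le hst).le

lemma phi_le_exp (hb : 0 < b) (s : ℝ) :
    phi b s ≤ 2 / 3 * exp 1 * (b : ℝ) * exp (-(b : ℝ) * s) := by
  rcases le_or_gt s (1 / b) with hs' | hs'
  · have hb' : (0 : ℝ) < b := Int.cast_pos.mpr hb
    have : 1 ≤ exp (1 - b * s) :=
      one_le_exp_iff.mpr (by rw [le_div_iff₀ hb'] at hs'; linarith)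
    calc phi b s ≤ 2 / 3 * b := phi_le hb s
      _ ≤ 2 / 3 * b * exp (1 - b * s) := le_mul_of_one_le_right (by positivity) this
      _ = _ := by rw [← exp_one_mul_exp_neg_mul]; ring
  · exact (phi_of_lt hb hs').le

lemma antitoneOn_phi (hb : 0 < b) : AntitoneOn (phi b) (Ioi (1 / (b : ℝ))) := by
  intro s hs t ht hst
  rw [phi_of_lt hb hs, phi_of_lt hb ht]
  have : (0 : ℝ) < b := Int.cast_pos.mpr hb
  exact mul_le_mul_of_nonneg_left (exp_le_exp.mpr (by nlinarith)) (by positivity)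

lemma phi_sub_le (hb : 0 < b) (h : s ≤ t) :
    phi b t - phi b s ≤ 2 / 3 * (b : ℝ) ^ 2 * (t - s) := by
  have hts : 0 ≤ t - s := sub_nonneg.mpr h
  rcases le_or_gt s 0 with hs₀ | hs₀
  · rw [phi_of_nonpos hs₀, sub_zero]
    exact phi_le_of_le hb (by linarith) hts
  rcases le_or_gt s (1 / b) with hs | hs
  · rw [phi_of_mem_Icc ⟨hs₀.le, hs⟩]
    linarith [phi_le_of_le hb le_rfl (hs₀.le.trans h)]
  · have : phi b t ≤ phi b s := antitoneOn_phi hb hs (hs.trans_le h) h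
    have : 0 ≤ 2 / 3 * (b : ℝ) ^ 2 * (t - s) := by positivity
    linarith

lemma measurable_phi (b : ℤ) : Measurable (phi b) :=
  Measurable.ite measurableSet_Iic measurable_const <|
    Measurable.ite measurableSet_Iic (by fun_prop) (by fun_prop)

lemma integrable_phi (hb : 0 < b) : Integrable (phi b) := by
  have hb' : (0 : ℝ) < b := Int.cast_pos.mpr hb
  have hdom :
      Integrable ((Ioi 0).indicator fun s ↦ 2 / 3 * exp 1 * (b : ℝ) * exp (-(b : ℝ) * s)) :=
    (integrable_indicator_iff measurableSet_Ioi).mpr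
      ((integrableOn_exp_mul_Ioi (neg_neg_of_pos hb') 0).const_mul _)
  refine hdom.mono' (measurable_phi b).aestronglyMeasurable (ae_of_all _ fun s ↦ ?_)
  rw [Real.norm_of_nonneg (phi_nonneg hb s)]
  rcases le_or_gt s 0 with hs | hs
  · rw [phi_of_nonpos hs, indicator_of_notMem (show s ∉ Ioi 0 from not_lt.mpr hs)]
  · rw [indicator_of_mem (show s ∈ Ioi 0 from hs)]
    exact phi_le_exp hb s

end Density

section Distribution

variable {b : ℤ} {t : ℝ}

lemma Phi_nonneg (hb : 0 < b) (t : ℝ) : 0 ≤ Phi b t :=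
  setIntegral_nonneg measurableSet_Iic fun s _ ↦ phi_nonneg hb s

lemma monotone_Phi (hb : 0 < b) : Monotone (Phi b) := fun _ _ hst ↦
  setIntegral_mono_set (integrable_phi hb).integrableOn (ae_of_all _ (phi_nonneg hb))
    (Iic_subset_Iic.mpr hst).eventuallyLE

lemma Phi_of_nonpos (ht : t ≤ 0) : Phi b t = 0 :=
  setIntegral_eq_zero_of_forall_eq_zero fun _ hs ↦ phi_of_nonpos (le_trans hs ht)

lemma Phi_eq_intervalIntegral (hb : 0 < b) (t : ℝ) : Phi b t = ∫ s in 0..t, phi b s := by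
  rw [← intervalIntegral.integral_Iic_sub_Iic (integrable_phi hb).integrableOn
    (integrable_phi hb).integrableOn]
  exact (sub_eq_self.mpr (Phi_of_nonpos le_rfl)).symm

lemma Phi_one_div (hb : 0 < b) : Phi b (1 / b) = 1 / 3 := by
  have hb' : (0 : ℝ) < b := Int.cast_pos.mpr hb
  have hlinear : EqOn (phi b) (fun s ↦ 2 / 3 * (b : ℝ) ^ 2 * s) (uIcc 0 (1 / b)) := fun s hs ↦
    phi_of_mem_Icc (uIcc_of_le (by positivity : (0 : ℝ) ≤ 1 / b) ▸ hs)
  rw [Phi_eq_intervalIntegral hb, intervalIntegral.integral_congr hlinear,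
    intervalIntegral.integral_const_mul, integral_id]
  field_simp
  ring

lemma integral_Ioi_one_div_phi (hb : 0 < b) : ∫ s in Ioi (1 / (b : ℝ)), phi b s = 2 / 3 := by
  have hb' : (0 : ℝ) < b := Int.cast_pos.mpr hb
  rw [setIntegral_congr_fun measurableSet_Ioi fun s hs ↦ phi_of_lt hb hs, integral_const_mul,
    integral_exp_mul_Ioi (neg_neg_of_pos hb'), neg_mul, mul_one_div_cancel hb'.ne']
  field_simp
  rw [← exp_add]
  norm_num

lemma integral_phi (hb : 0 < b) : ∫ s, phi b s = 1 := by
  rw [← intervalIntegral.integral_Iic_add_Ioi (integrable_phi hb).integrableOn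
    (integrable_phi hb).integrableOn]
  change Phi b (1 / b) + _ = 1
  rw [Phi_one_div hb, integral_Ioi_one_div_phi hb]
  norm_num

lemma Phi_le_one (hb : 0 < b) (t : ℝ) : Phi b t ≤ 1 :=
  integral_phi hb ▸ setIntegral_le_integral (integrable_phi hb) (ae_of_all _ (phi_nonneg hb))

lemma Phi_le_one_third (hb : 0 < b) (ht : t ≤ 1 / b) : Phi b t ≤ 1 / 3 :=
  Phi_one_div hb ▸ monotone_Phi hb ht

end Distribution

lemma phi_sub_le_mul_one_sub_Phi {b : ℤ} (hb : 0 < b) {t₁ t₂ : ℝ} (h : t₁ ≤ t₂) :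
    phi b t₂ - phi b t₁ ≤ exp 1 * (b : ℝ) ^ 2 * (t₂ - t₁) * (1 - Phi b t₁) := by
  have hfac : 0 ≤ exp 1 * (b : ℝ) ^ 2 * (t₂ - t₁) := by
    have := sub_nonneg.mpr h; positivity
  rcases le_or_gt t₁ (1 / b) with ht₁ | ht₁
  · have he : (1 : ℝ) ≤ exp 1 := one_le_exp zero_le_one
    calc phi b t₂ - phi b t₁ ≤ 2 / 3 * (b : ℝ) ^ 2 * (t₂ - t₁) := phi_sub_le hb h
      _ ≤ exp 1 * (b : ℝ) ^ 2 * (t₂ - t₁) * (2 / 3) := by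
        nlinarith [mul_nonneg (sq_nonneg (b : ℝ)) (sub_nonneg.mpr h)]
      _ ≤ exp 1 * (b : ℝ) ^ 2 * (t₂ - t₁) * (1 - Phi b t₁) := by
        gcongr; linarith [Phi_le_one_third hb ht₁]
  · calc phi b t₂ - phi b t₁ ≤ 0 := sub_nonpos.mpr (antitoneOn_phi hb ht₁ (ht₁.trans_le h) h)
      _ ≤ _ := mul_nonneg hfac (sub_nonneg.mpr (Phi_le_one hb t₁))

section Convolution

variable {b : ℤ} (μ : Measure ℝ) [IsFiniteMeasure μ]

lemma integrable_phi_const_sub (hb : 0 < b) (s : ℝ) : Integrable (fun s' ↦ phi b (s - s')) μ :=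
  .of_bound ((measurable_phi b).comp (measurable_const.sub measurable_id)).aestronglyMeasurable
    (2 / 3 * b) (ae_of_all _ fun s' ↦ by
      rw [Real.norm_of_nonneg (phi_nonneg hb _)]; exact phi_le hb _)

lemma integrable_one_sub_Phi_const_sub (hb : 0 < b) (s : ℝ) :
    Integrable (fun s' ↦ 1 - Phi b (s - s')) μ :=
  .of_bound (measurable_const.sub ((monotone_Phi hb).measurable.comp
      (measurable_const.sub measurable_id))).aestronglyMeasurable
    1 (ae_of_all _ fun s' ↦ by
      rw [Real.norm_eq_abs, abs_le]
      constructor <;> linarith [Phi_le_one hb (s - s'), Phi_nonneg hb (s - s')])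

end Convolution

theorem convolved_density_increment_bound_general (b : ℤ) (hb : 2 ≤ b)
    (μ : Measure ℝ) [IsProbabilityMeasure μ] :
    ∀ s₁ s₂ : ℝ, 0 ≤ s₁ → s₁ ≤ s₂ →
      (∫ s', phi b (s₂ - s') ∂μ) - ∫ s', phi b (s₁ - s') ∂μ
        ≤ Real.exp 1 * (b : ℝ) ^ 2 * (s₂ - s₁) *
            ∫ s', (1 - Phi b (s₁ - s')) ∂μ := by
  intro s₁ s₂ _ h
  have hb : 0 < b := by omega
  have hi₁ := integrable_phi_const_sub μ hb s₁
  have hi₂ := integrable_phi_const_sub μ hb s₂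
  rw [← integral_sub hi₂ hi₁, ← integral_const_mul]
  refine integral_mono (hi₂.sub hi₁) ((integrable_one_sub_Phi_const_sub μ hb s₁).const_mul _)
    fun s' ↦ ?_
  simpa only [sub_sub_sub_cancel_right] using
    phi_sub_le_mul_one_sub_Phi hb (sub_le_sub_right h s')

theorem convolved_density_increment_bound (b : ℤ) (hb : 2 ≤ b)
    (μ : Measure ℝ) [IsProbabilityMeasure μ] (hμ : μ (Set.Iio 0) = 0) :
    ∀ s₁ s₂ : ℝ, 0 ≤ s₁ → s₁ ≤ s₂ →
      (∫ s', phi b (s₂ - s') ∂μ) - ∫ s', phi b (s₁ - s') ∂μ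
        ≤ Real.exp 1 * (b : ℝ) ^ 2 * (s₂ - s₁) *
            ∫ s', (1 - Phi b (s₁ - s')) ∂μ :=
  convolved_density_increment_bound_general b hb μ
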